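/- Let X be a quantum-Wajsberg algebra and F a deductive system of X. Then F is strongly maximal if and only if the quotient X/F is locally finite, i.e., for every x ∈ X with ¬(x ≡_F 1) there exists n ≥ 1 such that xⁿ ≡_F 0, where xⁿ denotes x⊙⋯⊙x (n factors). -/
import Mathlib


/-- The underlying involutive bounded BE algebra of a quantum-Wajsberg algebra. -/
class PreQW (X : Type*) where
  imp : X → X → X
  zero : X
  one : X
  imp_self : ∀ x : X, imp x x = one
  imp_one : ∀ x : X, imp x one = one
  one_imp : ∀ x : X, imp one x = x
  exchange : ∀ x y z : X, imp x (imp y z) = imp y (imp x z)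
  zero_imp : ∀ x : X, imp zero x = one
  involutive : ∀ x : X, imp (imp x zero) zero = x

namespace PreQW

variable {X : Type*} [PreQW X]

/-- `x* = x → 0`. -/
def qstar (x : X) : X := imp x zero

/-- `x ⊔ y = (x → y) → y`. -/
def qsup (x y : X) : X := imp (imp x y) y

/-- `x ⊓ y = ((x* → y*) → y*)*`. -/
def qinf (x y : X) : X := qstar (imp (imp (qstar x) (qstar y)) (qstar y))

/-- `x ⊙ y = (x → y*)*`. -/
def qprod (x y : X) : X := qstar (imp x (qstar y))

/-- `x ≤ y` iff `x → y = 1`. -/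
def qle (x y : X) : Prop := imp x y = one

/-- `x ≤_Q y` iff `x = x ⊓ y`. -/
def qleQ (x y : X) : Prop := x = qinf x y

/-- `xⁿ = x ⊙ ⋯ ⊙ x` (`n` factors), with `x⁰ = 1`. -/
def qpow (x : X) : ℕ → X
  | 0 => one
  | n + 1 => qprod x (qpow x n)

/-- A filter: nonempty, closed under `⊙`, and `x ∈ F` implies `y → x ∈ F`. -/
def IsFilter (F : Set X) : Prop :=
  F.Nonempty ∧ (∀ x ∈ F, ∀ y ∈ F, qprod x y ∈ F) ∧ (∀ x ∈ F, ∀ y : X, imp y x ∈ F)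

/-- A deductive system: contains `1` and is closed under modus ponens. -/
def IsDS (F : Set X) : Prop :=
  (one : X) ∈ F ∧ ∀ x ∈ F, ∀ y : X, imp x y ∈ F → y ∈ F

/-- A maximal filter: proper and not strictly contained in any proper filter. -/
def IsMaximal (F : Set X) : Prop :=
  IsFilter F ∧ F ≠ Set.univ ∧
    ∀ G : Set X, IsFilter G → F ⊆ G → G ≠ Set.univ → G = F

/-- The strong maximality condition: for every `x ∉ F`, `(xⁿ)* ∈ F` for some `n ≥ 1`. -/
def StrongMaxCond (F : Set X) : Prop :=
  ∀ x : X, x ∉ F → ∃ n : ℕ, 1 ≤ n ∧ qstar (qpow x n) ∈ F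

/-- A strongly maximal filter. -/
def IsStronglyMaximal (F : Set X) : Prop :=
  IsFilter F ∧ StrongMaxCond F

/-- `x ∼ y`: there is `α` with `x ≤ α ≤ x` and `y ≤ α ≤ y`. -/
def Persp (x y : X) : Prop :=
  ∃ α : X, imp x α = one ∧ imp α x = one ∧ imp y α = one ∧ imp α y = one

/-- `x ≡_F y` iff there is `λ` with `x, y ≤_Q λ` and `λ → x, λ → y ∈ F`. -/
def equivF (F : Set X) (x y : X) : Prop :=
  ∃ l : X, qleQ x l ∧ qleQ y l ∧ imp l x ∈ F ∧ imp l y ∈ F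

end PreQW

/-- A quantum-Wajsberg algebra: an involutive BE algebra satisfying axiom (QW). -/
class QW (X : Type*) extends PreQW X where
  qw : ∀ x y z : X,
    imp x (PreQW.qinf (PreQW.qinf x y) (PreQW.qinf z x)) =
      PreQW.qinf (imp x y) (imp x z)

open PreQW

section Aux

variable {X : Type*} [PreQW X]

lemma qstar_star (x : X) : qstar (qstar x) = x := PreQW.involutive x

lemma imp_star_star (a b : X) : imp (qstar a) (qstar b) = imp b a := by
  unfold qstar
  rw [PreQW.exchange, PreQW.involutive]

lemma qstar_one : qstar (one : X) = zero := PreQW.one_imp zero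

lemma qstar_zero : qstar (zero : X) = one := PreQW.zero_imp zero

lemma qinf_one (x : X) : qinf x one = x := by
  unfold qinf
  rw [qstar_one, PreQW.involutive]
  exact qstar_star x

lemma qinf_one_left (l : X) : qinf one l = l := by
  unfold qinf
  rw [qstar_one, PreQW.zero_imp, PreQW.one_imp, qstar_star]

lemma qinf_zero_left (l : X) : qinf zero l = zero := by
  unfold qinf
  rw [qstar_zero, PreQW.one_imp, PreQW.imp_self]
  exact qstar_one

lemma qleQ_self (x : X) : qleQ x x := by
  unfold qleQ qinf
  rw [PreQW.imp_self, PreQW.one_imp, qstar_star]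

lemma qleQ_imp {x l : X} (h : qleQ x l) : imp x l = one := by
  have hx : qstar x = imp (imp (qstar x) (qstar l)) (qstar l) := by
    conv_lhs => rw [h]
    exact qstar_star _
  calc imp x l = imp (qstar l) (qstar x) := (imp_star_star l x).symm
    _ = imp (qstar l) (imp (imp (qstar x) (qstar l)) (qstar l)) := by rw [← hx]
    _ = imp (imp (qstar x) (qstar l)) (imp (qstar l) (qstar l)) := PreQW.exchange ..
    _ = one := by rw [PreQW.imp_self, PreQW.imp_one]

end Aux

/-- Theorem 4.10: `F` is strongly maximal iff `X/F` is locally finite. -/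
theorem qw_thm_4_10 {X : Type*} [QW X] (F : Set X) (hF : IsDS F) :
    StrongMaxCond F ↔
      ∀ x : X, ¬ equivF F x one →
        ∃ n : ℕ, 1 ≤ n ∧ equivF F (qpow x n) zero := by
  constructor
  · intro h x hx
    have hxF : x ∉ F := by
      intro hxF
      exact hx ⟨one, (qinf_one x).symm, (qinf_one_left one).symm,
        by rw [PreQW.one_imp]; exact hxF, by rw [PreQW.one_imp]; exact hF.1⟩
    obtain ⟨n, hn, hstar⟩ := h x hxF
    exact ⟨n, hn, ⟨qpow x n, qleQ_self _, (qinf_zero_left _).symm,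
      by rw [PreQW.imp_self]; exact hF.1, hstar⟩⟩
  · intro h x hxF
    have hx : ¬ equivF F x one := by
      rintro ⟨l, hxl, h1l, hlx, hl1⟩
      have : l = one := by
        have := h1l
        unfold qleQ at this
        rw [qinf_one_left] at this
        exact this.symm
      rw [this, PreQW.one_imp] at hlx
      exact hxF hlx
    obtain ⟨n, hn, l, hpl, h0l, hlp, hl0⟩ := h x hx
    refine ⟨n, hn, ?_⟩
    have himp : imp (qstar l) (qstar (qpow x n)) ∈ F := by
      rw [imp_star_star, qleQ_imp hpl]
      exact hF.1
    exact hF.2 (qstar l) hl0 _ himp
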